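/- Suppose P is symmetric positive definite, F monotone with zero set Z* nonempty, the iterates satisfy P(z_k - z_{k+1}) ∈ F(z_{k+1}), and metric sub-regularity holds on a set containing all iterates: α·dist_P(z, Z*) ≤ dist_{P^{-1}}(0, F(z)) for some α > 0. Then for all k ≥ ⌈e/α²⌉: dist²_{P^{-1}}(0, F(z_k)) ≤ exp(1 - k/⌈e/α²⌉) · dist²_{P^{-1}}(0, F(z_0)). -/

import Mathlib

open Matrix

/-- Quadratic form `⟨v, G v⟩`. -/
def qf {ι : Type*} [Fintype ι] (G : Matrix ι ι ℝ) (v : ι → ℝ) : ℝ := v ⬝ᵥ G.mulVec v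

/-- Squared distance (in the quadratic form of `G`) from `0` to a set `S`. -/
noncomputable def distSqTo {ι : Type*} [Fintype ι] (G : Matrix ι ι ℝ)
    (S : Set (ι → ℝ)) : ℝ := sInf (qf G '' S)

/-!
Fejér monotonicity of the iterates towards every zero `u` of `F`, together with the monotone decay
of the steps `‖z_i - z_{i+1}‖_P`, gives the sublinear bound `T · r_{n+T} ≤ D_n`, where
`r_k = dist²_{P⁻¹}(0, F z_k)` and `D_n = dist²_P(z_n, Z*)` (the step is an element of `F z_{n+T}`).
Sub-regularity `α² D_n ≤ r_n` then turns this into `D_{n+T} ≤ D_n / (T α²) ≤ D_n / e` for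
`T = ⌈e / α²⌉`, and iterating over blocks of length `T` gives the exponential rate.
-/

open Real

section Decay

lemma le_exp_neg_div_mul_of_antitone {D : ℕ → ℝ} {T : ℕ} (hD : Antitone D)
    (hblock : ∀ n, D (n + T) ≤ exp (-1) * D n) (n : ℕ) :
    D n ≤ exp (-((n / T : ℕ) : ℝ)) * D 0 := by
  have hiter : ∀ j s, D (s + T * j) ≤ exp (-(j : ℝ)) * D s := by
    intro j s
    induction j with
    | zero => simp
    | succ j ih =>
      calc D (s + T * (j + 1)) = D (s + T * j + T) := by rw [mul_add_one, add_assoc]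
        _ ≤ exp (-1) * D (s + T * j) := hblock _
        _ ≤ exp (-1) * (exp (-(j : ℝ)) * D s) := by gcongr
        _ = exp (-((j + 1 : ℕ) : ℝ)) * D s := by
          rw [← mul_assoc, ← Real.exp_add]; push_cast; ring_nf
  calc D n = D (n % T + T * (n / T)) := by rw [Nat.mod_add_div]
    _ ≤ exp (-((n / T : ℕ) : ℝ)) * D (n % T) := hiter _ _
    _ ≤ exp (-((n / T : ℕ) : ℝ)) * D 0 := by gcongr; exact hD (Nat.zero_le _)

lemma exp_neg_div_le_exp_one_sub_div (T k : ℕ) :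
    exp (-((k / T : ℕ) : ℝ)) ≤ exp (1 - (k : ℝ) / T) := by
  have hfloor : (k : ℝ) / T < (k / T : ℕ) + 1 := by
    rw [← Nat.floor_div_eq_div (K := ℝ)]
    exact Nat.lt_floor_add_one _
  exact Real.exp_le_exp.2 (by linarith)

lemma le_exp_one_sub_div_mul_of_sublinear {D r : ℕ → ℝ} {T : ℕ} {a : ℝ} (hT : 0 < T)
    (ha : exp 1 ≤ T * a) (hD : Antitone D) (hD0 : ∀ n, 0 ≤ D n)
    (hsub : ∀ n, T * r (n + T) ≤ D n) (hreg : ∀ n, a * D n ≤ r n) (k : ℕ) (hk : T ≤ k) :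
    r k ≤ exp (1 - (k : ℝ) / T) * r 0 := by
  have ha0 : 0 < a := pos_of_mul_pos_right ((Real.exp_pos 1).trans_le ha) (Nat.cast_nonneg T)
  have hr0 : 0 ≤ r 0 := (mul_nonneg ha0.le (hD0 0)).trans (hreg 0)
  have hblock : ∀ n, D (n + T) ≤ exp (-1) * D n := by
    intro n
    have h : exp 1 * D (n + T) ≤ D n :=
      calc exp 1 * D (n + T) ≤ T * (a * D (n + T)) := by
            rw [← mul_assoc]; exact mul_le_mul_of_nonneg_right ha (hD0 _)
        _ ≤ T * r (n + T) := by gcongr; exact hreg _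
        _ ≤ D n := hsub n
    rw [Real.exp_neg, inv_mul_eq_div, le_div_iff₀ (Real.exp_pos 1)]
    linarith
  obtain ⟨n, rfl⟩ : ∃ n, k = n + T := ⟨k - T, by omega⟩
  have hdiv : (n + T) / T = n / T + 1 := Nat.add_div_right n hT
  have h : exp 1 * r (n + T) ≤ exp (-((n / T : ℕ) : ℝ)) * r 0 :=
    calc exp 1 * r (n + T) ≤ a * (T * r (n + T)) := by
          rw [← mul_assoc, mul_comm a]
          exact mul_le_mul_of_nonneg_right ha ((mul_nonneg ha0.le (hD0 _)).trans (hreg _))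
      _ ≤ a * (exp (-((n / T : ℕ) : ℝ)) * D 0) :=
          mul_le_mul_of_nonneg_left
            ((hsub n).trans (le_exp_neg_div_mul_of_antitone hD hblock n)) ha0.le
      _ ≤ exp (-((n / T : ℕ) : ℝ)) * r 0 := by
          rw [mul_left_comm]; gcongr; exact hreg 0
  calc r (n + T) ≤ exp (-(((n + T) / T : ℕ) : ℝ)) * r 0 := by
        have he : exp (-(((n / T : ℕ) : ℝ) + 1)) = exp (-((n / T : ℕ) : ℝ)) / exp 1 := by
          rw [neg_add, Real.exp_add, Real.exp_neg 1, div_eq_mul_inv]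
        rw [hdiv, Nat.cast_succ, he, div_mul_eq_mul_div, le_div_iff₀ (Real.exp_pos 1)]
        linarith
    _ ≤ exp (1 - ((n + T : ℕ) : ℝ) / T) * r 0 :=
        mul_le_mul_of_nonneg_right (exp_neg_div_le_exp_one_sub_div _ _) hr0

end Decay

lemma sq_mul_le_of_mul_sqrt_le {α x y : ℝ} (hα : 0 ≤ α) (hx : 0 ≤ x) (hy : 0 ≤ y)
    (h : α * √x ≤ √y) : α ^ 2 * x ≤ y := by
  rwa [Real.le_sqrt (by positivity) hy, mul_pow, Real.sq_sqrt hx] at h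

section QuadraticForm

variable {ι : Type*} [Fintype ι]

lemma qf_nonneg {G : Matrix ι ι ℝ} (hG : G.PosSemidef) (v : ι → ℝ) : 0 ≤ qf G v := by
  simpa [qf] using hG.dotProduct_mulVec_nonneg v

lemma qf_add {G : Matrix ι ι ℝ} (hG : G.IsSymm) (a b : ι → ℝ) :
    qf G (a + b) = qf G a + 2 * (a ⬝ᵥ G *ᵥ b) + qf G b := by
  have hcomm : b ⬝ᵥ G *ᵥ a = a ⬝ᵥ G *ᵥ b := by
    rw [dotProduct_mulVec, ← mulVec_transpose, hG.eq, dotProduct_comm]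
  simp only [qf, mulVec_add, dotProduct_add, add_dotProduct, hcomm]
  ring

lemma qf_inv_mulVec {G : Matrix ι ι ℝ} [DecidableEq ι] (hG : IsUnit G.det) (v : ι → ℝ) :
    qf G⁻¹ (G *ᵥ v) = qf G v := by
  rw [qf, mulVec_mulVec, nonsing_inv_mul G hG, one_mulVec, dotProduct_comm, qf]

lemma distSqTo_nonneg {G : Matrix ι ι ℝ} (hG : G.PosSemidef) (S : Set (ι → ℝ)) :
    0 ≤ distSqTo G S :=
  Real.sInf_nonneg (by rintro _ ⟨v, -, rfl⟩; exact qf_nonneg hG v)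

lemma distSqTo_le {G : Matrix ι ι ℝ} (hG : G.PosSemidef) {S : Set (ι → ℝ)} {w : ι → ℝ}
    (hw : w ∈ S) : distSqTo G S ≤ qf G w :=
  csInf_le ⟨0, by rintro _ ⟨v, -, rfl⟩; exact qf_nonneg hG v⟩ ⟨w, hw, rfl⟩

lemma le_distSqTo {G : Matrix ι ι ℝ} {S : Set (ι → ℝ)} {c : ℝ} (hS : S.Nonempty)
    (h : ∀ w ∈ S, c ≤ qf G w) : c ≤ distSqTo G S :=
  le_csInf (hS.image _) (by rintro _ ⟨w, hw, rfl⟩; exact h w hw)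

end QuadraticForm

section ProximalPoint

variable {ι : Type*} [Fintype ι] {P : Matrix ι ι ℝ} {F : (ι → ℝ) → Set (ι → ℝ)}
  {z : ℕ → ι → ℝ}

def zeroSet (F : (ι → ℝ) → Set (ι → ℝ)) : Set (ι → ℝ) := {u | 0 ∈ F u}

lemma qf_succ_sub_add_qf_step_le (hP : P.IsSymm)
    (hmono : ∀ z z' u v, u ∈ F z → v ∈ F z' → 0 ≤ (u - v) ⬝ᵥ (z - z'))
    (hstep : ∀ i, P *ᵥ (z i - z (i + 1)) ∈ F (z (i + 1))) {u : ι → ℝ} (hu : u ∈ zeroSet F)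
    (i : ℕ) : qf P (z (i + 1) - u) + qf P (z i - z (i + 1)) ≤ qf P (z i - u) := by
  have hfej : 0 ≤ (z (i + 1) - u) ⬝ᵥ P *ᵥ (z i - z (i + 1)) := by
    simpa [dotProduct_comm] using hmono _ _ _ _ (hstep i) hu
  rw [show z i - u = (z (i + 1) - u) + (z i - z (i + 1)) by abel, qf_add hP]
  linarith

lemma antitone_qf_step (hP : P.PosSemidef)
    (hmono : ∀ z z' u v, u ∈ F z → v ∈ F z' → 0 ≤ (u - v) ⬝ᵥ (z - z'))
    (hstep : ∀ i, P *ᵥ (z i - z (i + 1)) ∈ F (z (i + 1))) :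
    Antitone fun i => qf P (z i - z (i + 1)) := by
  refine antitone_nat_of_succ_le fun i => ?_
  set a := z i - z (i + 1)
  set b := z (i + 1) - z (i + 1 + 1)
  have hsymm : P.IsSymm := isHermitian_iff_isSymm.1 hP.isHermitian
  have hmon : 0 ≤ (P *ᵥ a - P *ᵥ b) ⬝ᵥ b := hmono _ _ _ _ (hstep i) (hstep (i + 1))
  rw [sub_dotProduct, dotProduct_comm (P *ᵥ a), dotProduct_comm (P *ᵥ b)] at hmon
  have hsplit := qf_add hsymm (b - a) a
  rw [sub_add_cancel, sub_dotProduct] at hsplit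
  have hdiff := qf_nonneg hP (b - a)
  change qf P b ≤ qf P a
  simp only [qf] at *
  linarith

lemma mul_qf_step_le (hP : P.PosSemidef)
    (hmono : ∀ z z' u v, u ∈ F z → v ∈ F z' → 0 ≤ (u - v) ⬝ᵥ (z - z'))
    (hstep : ∀ i, P *ᵥ (z i - z (i + 1)) ∈ F (z (i + 1))) {u : ι → ℝ} (hu : u ∈ zeroSet F)
    (m n : ℕ) : ((m : ℝ) + 1) * qf P (z (n + m) - z (n + m + 1)) ≤ qf P (z n - u) := by
  have hsymm : P.IsSymm := isHermitian_iff_isSymm.1 hP.isHermitian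
  have hfej := qf_succ_sub_add_qf_step_le hsymm hmono hstep hu
  induction m generalizing n with
  | zero => simpa using (le_add_of_nonneg_left (qf_nonneg hP _)).trans (hfej n)
  | succ m ih =>
    have hmon := antitone_qf_step hP hmono hstep (show n ≤ n + (m + 1) by omega)
    have h := ih (n + 1)
    rw [show n + 1 + m = n + (m + 1) by omega] at h
    push_cast
    linarith [hfej n]

lemma natCast_mul_distSqTo_inv_le [DecidableEq ι] (hP : P.PosDef)
    (hmono : ∀ z z' u v, u ∈ F z → v ∈ F z' → 0 ≤ (u - v) ⬝ᵥ (z - z'))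
    (hstep : ∀ i, P *ᵥ (z i - z (i + 1)) ∈ F (z (i + 1))) (hZ : (zeroSet F).Nonempty)
    {T : ℕ} (hT : 0 < T) (n : ℕ) :
    T * distSqTo P⁻¹ (F (z (n + T))) ≤ distSqTo P ((fun u => z n - u) '' zeroSet F) := by
  obtain ⟨m, rfl⟩ := Nat.exists_eq_add_of_lt hT
  have hres : distSqTo P⁻¹ (F (z (n + m + 1))) ≤ qf P (z (n + m) - z (n + m + 1)) := by
    rw [← qf_inv_mulVec (isUnit_iff_ne_zero.2 hP.det_pos.ne')]
    exact distSqTo_le hP.posSemidef.inv (hstep _)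
  refine le_distSqTo (hZ.image _) (Set.forall_mem_image.2 fun u hu => ?_)
  rw [zero_add, ← add_assoc]
  push_cast
  exact (mul_le_mul_of_nonneg_left hres (by positivity)).trans
    (mul_qf_step_le hP.posSemidef hmono hstep hu m n)

lemma antitone_distSqTo_zeroSet (hP : P.PosSemidef)
    (hmono : ∀ z z' u v, u ∈ F z → v ∈ F z' → 0 ≤ (u - v) ⬝ᵥ (z - z'))
    (hstep : ∀ i, P *ᵥ (z i - z (i + 1)) ∈ F (z (i + 1))) (hZ : (zeroSet F).Nonempty) :
    Antitone fun n => distSqTo P ((fun u => z n - u) '' zeroSet F) := by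
  refine antitone_nat_of_succ_le fun n =>
    le_distSqTo (hZ.image _) (Set.forall_mem_image.2 fun u hu => ?_)
  have hfej := qf_succ_sub_add_qf_step_le (isHermitian_iff_isSymm.1 hP.isHermitian) hmono
    hstep hu n
  linarith [distSqTo_le hP (Set.mem_image_of_mem (fun u => z (n + 1) - u) hu),
    qf_nonneg hP (z n - z (n + 1))]

end ProximalPoint

theorem stmt9_general {d : ℕ} (P : Matrix (Fin d) (Fin d) ℝ) (hP : P.PosDef)
    (F : (Fin d → ℝ) → Set (Fin d → ℝ))
    (hmono : ∀ z z' u v, u ∈ F z → v ∈ F z' → 0 ≤ (u - v) ⬝ᵥ (z - z'))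
    (hZ : {u : Fin d → ℝ | (0 : Fin d → ℝ) ∈ F u}.Nonempty)
    (z : ℕ → Fin d → ℝ)
    (hstep : ∀ i, P.mulVec (z i - z (i+1)) ∈ F (z (i+1)))
    (α : ℝ) (hα : 0 < α)
    (hreg : ∀ k : ℕ,
      α * Real.sqrt (distSqTo P ((fun u => z k - u) '' {u | (0 : Fin d → ℝ) ∈ F u}))
        ≤ Real.sqrt (distSqTo P⁻¹ (F (z k)))) :
    ∀ k : ℕ, ⌈Real.exp 1 / α ^ 2⌉₊ ≤ k →
      distSqTo P⁻¹ (F (z k)) ≤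
        Real.exp (1 - (k : ℝ) / (⌈Real.exp 1 / α ^ 2⌉₊ : ℝ)) * distSqTo P⁻¹ (F (z 0)) := by
  have hT : 0 < ⌈exp 1 / α ^ 2⌉₊ := Nat.ceil_pos.2 (by positivity)
  have hTα : exp 1 ≤ ⌈exp 1 / α ^ 2⌉₊ * α ^ 2 :=
    (div_le_iff₀ (by positivity)).1 (Nat.le_ceil _)
  exact le_exp_one_sub_div_mul_of_sublinear hT hTα
    (antitone_distSqTo_zeroSet hP.posSemidef hmono hstep hZ)
    (fun n => distSqTo_nonneg hP.posSemidef _)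
    (natCast_mul_distSqTo_inv_le hP hmono hstep hZ hT)
    (fun n => sq_mul_le_of_mul_sqrt_le hα.le (distSqTo_nonneg hP.posSemidef _)
      (distSqTo_nonneg hP.posSemidef.inv _) (hreg n))

/-- Linear convergence of IDS under metric sub-regularity. -/
theorem stmt9 {d : ℕ} (P : Matrix (Fin d) (Fin d) ℝ) (hP : P.PosDef)
    (F : (Fin d → ℝ) → Set (Fin d → ℝ))
    (hmono : ∀ z z' u v, u ∈ F z → v ∈ F z' → 0 ≤ (u - v) ⬝ᵥ (z - z'))
    (hclosed : ∀ z, IsClosed (F z)) (hconvex : ∀ z, Convex ℝ (F z))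
    (hZ : {u : Fin d → ℝ | (0 : Fin d → ℝ) ∈ F u}.Nonempty)
    (z : ℕ → Fin d → ℝ)
    (hstep : ∀ i, P.mulVec (z i - z (i+1)) ∈ F (z (i+1)))
    (hne : (F (z 0)).Nonempty)
    (α : ℝ) (hα : 0 < α)
    (hreg : ∀ k : ℕ,
      α * Real.sqrt (distSqTo P ((fun u => z k - u) '' {u | (0 : Fin d → ℝ) ∈ F u}))
        ≤ Real.sqrt (distSqTo P⁻¹ (F (z k)))) :
    ∀ k : ℕ, ⌈Real.exp 1 / α ^ 2⌉₊ ≤ k →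
      distSqTo P⁻¹ (F (z k)) ≤
        Real.exp (1 - (k : ℝ) / (⌈Real.exp 1 / α ^ 2⌉₊ : ℝ)) * distSqTo P⁻¹ (F (z 0)) :=
  stmt9_general P hP F hmono hZ z hstep α hα hreg
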